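/- Let F be the global rule of a sand automaton. The following statements are equivalent: (1) F is equicontinuous on (C,d); (2) F is ultimately periodic, i.e. there exist n ≥ 0 and p > 0 with F^(n+p) = F^n; (3) every configuration x ∈ C is ultimately periodic for F, i.e. for every x ∈ C there exist n ≥ 0 and p > 0 with F^(n+p)(x) = F^n(x). -/

import Mathlib

open Filter

/-- The set `Z̃ = ℤ ∪ {−∞, +∞}` of extended integers. -/
abbrev Ztilde := WithBot (WithTop ℤ)

/-- Embedding of `ℤ` into `Z̃`. -/
def Ztilde.ofInt (z : ℤ) : Ztilde := ((z : WithTop ℤ) : WithBot (WithTop ℤ))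

/-- The underlying integer of a finite extended integer (0 on `±∞`). -/
def Ztilde.toInt (n : Ztilde) : ℤ := (n.unbotD 0).untopD 0

/-- The sand-automata configuration space `C = Z̃^(ℤ^d)`. -/
abbrev Conf (d : ℕ) := (Fin d → ℤ) → Ztilde

/-- `ζ : C → {0,1}^(ℤ^(d+1))`, `ζ(x)_(i,k) = 1` iff `x_i ≥ k`. -/
noncomputable def zeta {d : ℕ} (x : Conf d) : (Fin d → ℤ) × ℤ → Bool :=
  fun j => decide (Ztilde.ofInt j.2 ≤ x j.1)

/-- The subshift `S_K`: configurations with no `0` below a `1` in a column. -/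
def SK (d : ℕ) : Set ((Fin d → ℤ) × ℤ → Bool) :=
  {y | ∀ (i : Fin d → ℤ) (k : ℤ), y (i, k + 1) = true → y (i, k) = true}

/-- The sup-norm `|j|_∞` of an index in `ℤ^(d+1) = ℤ^d × ℤ`. -/
def idxNorm {d : ℕ} (j : (Fin d → ℤ) × ℤ) : ℕ :=
  max (Finset.univ.sup fun t => (j.1 t).natAbs) j.2.natAbs

open scoped Classical in
/-- The distance `d(x,y) = 2^(−min{|j|_∞ : ζ(x)_j ≠ ζ(y)_j})`, `0` if `x = y`. -/
noncomputable def saDist {d : ℕ} (x y : Conf d) : ℝ :=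
  if x = y then 0
  else (2 : ℝ) ^ (-((sInf {n : ℕ | ∃ j, idxNorm j = n ∧ zeta x j ≠ zeta y j} : ℕ) : ℤ))

/-- The measuring device `β_r^m`. -/
noncomputable def beta (r : ℕ) (m : ℤ) (n : Ztilde) : Ztilde :=
  if Ztilde.ofInt (m + r) < n then ⊤
  else if n < Ztilde.ofInt (m - r) then ⊥
  else Ztilde.ofInt (n.toInt - m)

/-- The neighborhood `[−r,r]^d \ {0}` of a sand automaton of radius `r`. -/
def Nbhd (d r : ℕ) := {k : Fin d → ℤ // (∀ t, (k t).natAbs ≤ r) ∧ k ≠ 0}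

/-- The range `R_r^i(x)` of center `i` and radius `r`. -/
noncomputable def saRange {d : ℕ} (r : ℕ) (x : Conf d) (i : Fin d → ℤ) : Nbhd d r → Ztilde :=
  fun k => beta r (x i).toInt (x (i + k.1))

/-- A sand automaton of dimension `d`: a radius `r` and a local rule `f`
taking values in `{−r,…,r}`. -/
structure SandAutomaton (d : ℕ) where
  r : ℕ
  f : (Nbhd d r → Ztilde) → ℤ
  f_mem : ∀ R, (f R).natAbs ≤ r

/-- The global rule `F : C → C` of a sand automaton. -/
noncomputable def SandAutomaton.global {d : ℕ} (S : SandAutomaton d) (x : Conf d) : Conf d :=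
  fun i => if x i = ⊤ ∨ x i = ⊥ then x i
    else Ztilde.ofInt ((x i).toInt + S.f (saRange S.r x i))

/-- The shift map `σ^k`. -/
def shift {d : ℕ} (k : Fin d → ℤ) (x : Conf d) : Conf d := fun i => x (i + k)

/-- The raising map `ρ`. -/
def raise {d : ℕ} (x : Conf d) : Conf d :=
  fun i => if x i = ⊤ ∨ x i = ⊥ then x i else Ztilde.ofInt ((x i).toInt + 1)

/-- A map `F : C → C` is infinity-preserving. -/
def InfinityPreserving {d : ℕ} (F : Conf d → Conf d) : Prop :=
  ∀ (x : Conf d) (i : Fin d → ℤ),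
    (F x i = ⊤ ↔ x i = ⊤) ∧ (F x i = ⊥ ↔ x i = ⊥)

/-!
Through `ζ`, `d(x, y) < 2^(-R)` says that `ζ(x)` and `ζ(y)` agree on the ball of radius `R`
in `ℤ^(d+1)`; the global rule is local with radius `2r + 1` and commutes with the translations
of `ℤ^(d+1)`, vertical ones included.

If `F^(n+p) = F^n`, only the iterates below `n + p` occur, and locality gives equicontinuity.
Conversely, equicontinuity makes the bit of `ζ(F^m x)` at the origin a function of the
radius-`K` pattern of `ζ(x)`, for every `m`; there are finitely many such functions, so two
iterates agree at the origin, hence everywhere by translation invariance. Finally, blocks laid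
along the first axis of `ℤ^d` (this needs `d ≥ 1`) give a configuration containing every finite
pattern; if it is ultimately periodic with `n` and `p`, locality forces `F^(n+p) = F^n`.
-/

open Function Set

theorem Function.exists_lt_iterate_eq {α : Type*} {f : α → α} {n p : ℕ} (hp : 0 < p)
    (h : f^[n + p] = f^[n]) (m : ℕ) : ∃ m' < n + p, f^[m] = f^[m'] := by
  induction m using Nat.strong_induction_on with
  | _ m ih =>
    by_cases hm : m < n + p
    · exact ⟨m, hm, rfl⟩
    obtain ⟨m', hm', heq⟩ := ih (m - p) (by omega)
    refine ⟨m', hm', ?_⟩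
    rw [← heq, show m = m - (n + p) + (n + p) by omega, iterate_add, h, ← iterate_add]
    congr 1
    omega

namespace Ztilde

theorem eq_bot_or_eq_top_or_eq_ofInt (a : Ztilde) : a = ⊥ ∨ a = ⊤ ∨ ∃ z, a = ofInt z := by
  induction a using WithBot.recBotCoe with
  | bot => exact Or.inl rfl
  | coe a =>
    induction a using WithTop.recTopCoe with
    | top => exact Or.inr (Or.inl rfl)
    | coe z => exact Or.inr (Or.inr ⟨z, rfl⟩)

@[simp] theorem ofInt_ne_top (z : ℤ) : ofInt z ≠ ⊤ := by simp [ofInt]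

@[simp] theorem ofInt_ne_bot (z : ℤ) : ofInt z ≠ ⊥ := by simp [ofInt]

@[simp] theorem bot_ne_ofInt (z : ℤ) : ⊥ ≠ ofInt z := (ofInt_ne_bot z).symm

@[simp] theorem top_ne_ofInt (z : ℤ) : ⊤ ≠ ofInt z := (ofInt_ne_top z).symm

@[simp] theorem toInt_ofInt (z : ℤ) : (ofInt z).toInt = z := rfl

@[simp] theorem ofInt_inj {a b : ℤ} : ofInt a = ofInt b ↔ a = b := by simp [ofInt]

@[simp] theorem ofInt_le_ofInt {a b : ℤ} : ofInt a ≤ ofInt b ↔ a ≤ b := by simp [ofInt]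

@[simp] theorem ofInt_lt_ofInt {a b : ℤ} : ofInt a < ofInt b ↔ a < b := by simp [ofInt]

@[simp] theorem bot_lt_ofInt (z : ℤ) : ⊥ < ofInt z := by simp [ofInt]

@[simp] theorem ofInt_lt_top (z : ℤ) : ofInt z < ⊤ := lt_top_iff_ne_top.2 (ofInt_ne_top z)

theorem le_of_forall_ofInt_le {a b : Ztilde} (h : ∀ q, ofInt q ≤ a → ofInt q ≤ b) :
    a ≤ b := by
  rcases eq_bot_or_eq_top_or_eq_ofInt a with rfl | rfl | ⟨c, rfl⟩
  · exact bot_le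
  · rcases eq_bot_or_eq_top_or_eq_ofInt b with rfl | rfl | ⟨c, rfl⟩
    · simpa using h 0
    · exact le_rfl
    · simpa using h (c + 1)
  · exact h c le_rfl

theorem eq_of_forall_ofInt_le_iff {a b : Ztilde} (h : ∀ q, ofInt q ≤ a ↔ ofInt q ≤ b) :
    a = b :=
  le_antisymm (le_of_forall_ofInt_le fun q => (h q).1) (le_of_forall_ofInt_le fun q => (h q).2)

theorem eq_ofInt_iff {a : Ztilde} {m : ℤ} :
    a = ofInt m ↔ ofInt m ≤ a ∧ ¬ofInt (m + 1) ≤ a := by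
  rcases eq_bot_or_eq_top_or_eq_ofInt a with rfl | rfl | ⟨c, rfl⟩ <;> simp
  omega

def addInt (v : ℤ) : Ztilde → Ztilde := WithBot.map (WithTop.map (· + v))

@[simp] theorem addInt_bot (v : ℤ) : addInt v ⊥ = ⊥ := rfl

@[simp] theorem addInt_top (v : ℤ) : addInt v ⊤ = ⊤ := rfl

@[simp] theorem addInt_ofInt (v z : ℤ) : addInt v (ofInt z) = ofInt (z + v) := rfl

theorem ofInt_le_addInt {v q : ℤ} {a : Ztilde} :
    ofInt q ≤ addInt v a ↔ ofInt (q - v) ≤ a := by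
  rcases eq_bot_or_eq_top_or_eq_ofInt a with rfl | rfl | ⟨c, rfl⟩ <;> simp

end Ztilde

open Ztilde

theorem ofInt_le_beta {r : ℕ} {m q : ℤ} {a : Ztilde} :
    ofInt q ≤ beta r m a ↔ ofInt (m + max (-(r : ℤ)) (min q (r + 1))) ≤ a := by
  rcases eq_bot_or_eq_top_or_eq_ofInt a with rfl | rfl | ⟨c, rfl⟩
  · simp [beta]
  · simp [beta]
  · unfold beta
    split_ifs <;> simp_all <;> omega

theorem beta_congr {r : ℕ} {m : ℤ} {a b : Ztilde}
    (h : ∀ q, (q - m).natAbs ≤ r + 1 → (ofInt q ≤ a ↔ ofInt q ≤ b)) :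
    beta r m a = beta r m b :=
  eq_of_forall_ofInt_le_iff fun q => by
    simp only [ofInt_le_beta]
    exact h _ (by omega)

theorem beta_add_addInt (r : ℕ) (m v : ℤ) (a : Ztilde) :
    beta r (m + v) (addInt v a) = beta r m a :=
  eq_of_forall_ofInt_le_iff fun q => by
    rw [ofInt_le_beta, ofInt_le_beta, ofInt_le_addInt, add_right_comm, add_sub_cancel_right]

section Configurations

variable {d : ℕ}

theorem idxNorm_le_iff {j : (Fin d → ℤ) × ℤ} {R : ℕ} :
    idxNorm j ≤ R ↔ (∀ t, (j.1 t).natAbs ≤ R) ∧ j.2.natAbs ≤ R := by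
  simp [idxNorm, Finset.sup_le_iff]

theorem idxNorm_add_le (j s : (Fin d → ℤ) × ℤ) :
    idxNorm (j + s) ≤ idxNorm j + idxNorm s := by
  obtain ⟨hj1, hj2⟩ := idxNorm_le_iff.1 (le_refl (idxNorm j))
  obtain ⟨hs1, hs2⟩ := idxNorm_le_iff.1 (le_refl (idxNorm s))
  refine idxNorm_le_iff.2 ⟨fun t => ?_, ?_⟩
  · have := hj1 t; have := hs1 t; simp only [Prod.fst_add, Pi.add_apply]; omega
  · simp only [Prod.snd_add]; omega

def idxBall (R : ℕ) : Set ((Fin d → ℤ) × ℤ) := {j | idxNorm j ≤ R}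

theorem idxBall_mono : Monotone (idxBall (d := d)) := fun _ _ h _ hj => le_trans hj h

theorem zero_mem_idxBall (R : ℕ) : (0 : (Fin d → ℤ) × ℤ) ∈ idxBall R := by
  simp [idxBall, idxNorm]

instance (R : ℕ) : Finite (idxBall (d := d) R) := by
  refine Set.Finite.to_subtype <| ((Set.Finite.pi fun _ => finite_Icc (-(R : ℤ)) R).prod
    (finite_Icc (-(R : ℤ)) R)).subset fun j hj => ?_
  obtain ⟨h1, h2⟩ := idxNorm_le_iff.1 hj
  simp only [mem_prod, Set.mem_pi, mem_univ, mem_Icc, forall_const]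
  exact ⟨fun t => by have := h1 t; omega, by omega⟩

theorem zeta_apply_eq_iff {x y : Conf d} {i : Fin d → ℤ} {q : ℤ} :
    zeta x (i, q) = zeta y (i, q) ↔ (ofInt q ≤ x i ↔ ofInt q ≤ y i) := by
  simp [zeta]

theorem zeta_injective : Injective (zeta (d := d)) := fun _ _ h =>
  funext fun i => eq_of_forall_ofInt_le_iff fun q => zeta_apply_eq_iff.1 (congrFun h (i, q))

def Conf.translate (j : (Fin d → ℤ) × ℤ) (x : Conf d) : Conf d :=
  fun i => addInt (-j.2) (x (i + j.1))

theorem zeta_translate (j s : (Fin d → ℤ) × ℤ) (x : Conf d) :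
    zeta (Conf.translate j x) s = zeta x (j + s) := by
  simp [zeta, Conf.translate, ofInt_le_addInt, add_comm]

theorem eq_of_forall_zeta_zero_eq {G H : Conf d → Conf d}
    (hG : ∀ j, Function.Commute G (Conf.translate j))
    (hH : ∀ j, Function.Commute H (Conf.translate j))
    (h : ∀ x, zeta (G x) 0 = zeta (H x) 0) : G = H := by
  funext x
  refine zeta_injective (funext fun j => ?_)
  have hx := h (Conf.translate j x)
  rwa [(hG j).eq x, (hH j).eq x, zeta_translate, zeta_translate, add_zero] at hx

theorem exists_iterate_eq_of_eqOn {F : Conf d → Conf d}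
    (hF : ∀ j, Function.Commute F (Conf.translate j)) {K : ℕ}
    (hK : ∀ x y, EqOn (zeta x) (zeta y) (idxBall K) →
      ∀ n, zeta (F^[n] x) 0 = zeta (F^[n] y) 0) :
    ∃ n p, 0 < p ∧ F^[n + p] = F^[n] := by
  let π : Conf d → (idxBall K → Bool) := fun x => (idxBall K).domRestrict (zeta x)
  have hfactor : ∀ n, (fun x => zeta (F^[n] x) 0) ∈ range (· ∘ π) := fun n =>
    ⟨extend π (fun x => zeta (F^[n] x) 0) fun _ => false, funext fun x =>
      FactorsThrough.extend_apply
        (fun x y hxy => hK x y (domRestrict_eq_domRestrict_iff.1 hxy) n) _ x⟩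
  obtain ⟨a, b, hab, heq⟩ := (finite_range _).exists_lt_map_eq_of_forall_mem hfactor
  refine ⟨a, b - a, by omega, ?_⟩
  rw [Nat.add_sub_cancel' hab.le]
  exact eq_of_forall_zeta_zero_eq (fun j => (hF j).iterate_left b)
    (fun j => (hF j).iterate_left a) fun x => congrFun heq.symm x

end Configurations

section Metric

variable {d : ℕ}

theorem saDist_lt_two_zpow_iff {x y : Conf d} {R : ℕ} :
    saDist x y < 2 ^ (-(R : ℤ)) ↔ EqOn (zeta x) (zeta y) (idxBall R) := by
  unfold saDist
  split_ifs with hxy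
  · subst hxy
    exact iff_of_true (by positivity) (eqOn_refl _ _)
  · set D := {n : ℕ | ∃ j, idxNorm j = n ∧ zeta x j ≠ zeta y j}
    rw [zpow_lt_zpow_iff_right₀ one_lt_two, neg_lt_neg_iff, Nat.cast_lt]
    constructor
    · intro hR j hj
      by_contra hzj
      exact ((Nat.sInf_le (⟨j, rfl, hzj⟩ : idxNorm j ∈ D)).trans hj).not_gt hR
    · intro h
      have hD : D.Nonempty := by
        obtain ⟨j, hj⟩ := Function.ne_iff.1 (zeta_injective.ne hxy)
        exact ⟨_, j, rfl, hj⟩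
      obtain ⟨j, hjD, hzj⟩ := Nat.sInf_mem hD
      by_contra hle
      exact hzj (h (show idxNorm j ≤ R by omega))

theorem exists_two_zpow_lt {ε : ℝ} (hε : 0 < ε) :
    ∃ k : ℕ, (2 : ℝ) ^ (-(k : ℤ)) < ε := by
  obtain ⟨k, hk⟩ := exists_pow_lt_of_lt_one hε (by norm_num : (2⁻¹ : ℝ) < 1)
  exact ⟨k, by rwa [zpow_neg, zpow_natCast, ← inv_pow]⟩

theorem equicontinuous_iff_eqOn (F : Conf d → Conf d) :
    (∀ ε : ℝ, 0 < ε → ∃ δ : ℝ, 0 < δ ∧ ∀ x y : Conf d, saDist x y < δ →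
        ∀ n : ℕ, saDist (F^[n] x) (F^[n] y) < ε) ↔
      ∀ k : ℕ, ∃ K : ℕ, ∀ x y : Conf d, EqOn (zeta x) (zeta y) (idxBall K) →
        ∀ n : ℕ, EqOn (zeta (F^[n] x)) (zeta (F^[n] y)) (idxBall k) := by
  constructor
  · intro h k
    obtain ⟨δ, hδ, hF⟩ := h _ (zpow_pos two_pos (-(k : ℤ)))
    obtain ⟨K, hK⟩ := exists_two_zpow_lt hδ
    exact ⟨K, fun x y hxy n =>
      saDist_lt_two_zpow_iff.1 (hF x y ((saDist_lt_two_zpow_iff.2 hxy).trans hK) n)⟩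
  · intro h ε hε
    obtain ⟨k, hk⟩ := exists_two_zpow_lt hε
    obtain ⟨K, hK⟩ := h k
    exact ⟨_, zpow_pos two_pos (-(K : ℤ)), fun x y hxy n =>
      (saDist_lt_two_zpow_iff.2 (hK x y (saDist_lt_two_zpow_iff.1 hxy) n)).trans hk⟩

end Metric

section UniversalConfiguration

variable {d : ℕ}

theorem exists_seq_eqOn_zeta :
    ∃ u : ℕ → Conf d, ∀ (R : ℕ) (x : Conf d),
      ∃ k, R ≤ k ∧ EqOn (zeta (u k)) (zeta x) (idxBall R) := by
  have hR : ∀ R, ∃ v : ℕ → Conf d, ∀ x, ∃ m, EqOn (zeta (v m)) (zeta x) (idxBall R) :=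
    fun R => by
      let π : Conf d → (idxBall R → Bool) := fun x => (idxBall R).domRestrict (zeta x)
      obtain ⟨g, hg⟩ := exists_surjective_nat (idxBall (d := d) R → Bool)
      refine ⟨fun m => invFun π (g m), fun x => ?_⟩
      obtain ⟨m, hm⟩ := hg (π x)
      refine ⟨m, domRestrict_eq_domRestrict_iff.1 ?_⟩
      simp only [hm]
      exact invFun_eq (f := π) ⟨x, rfl⟩
  choose v hv using hR
  refine ⟨fun k => v k.unpair.2 k.unpair.1, fun R x => ?_⟩
  obtain ⟨m, hm⟩ := hv R x
  exact ⟨Nat.pair m R, Nat.right_le_pair m R, by simpa using hm⟩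

/-- Block `k` is the slab `k² ≤ i₀ ≤ k² + 2k` (negative `i₀` fall into block `0`); it carries
`u k`, translated to its centre `k² + k`. -/
def blockConf (u : ℕ → Conf (d + 1)) : Conf (d + 1) := fun i =>
  let k := (i 0).toNat.sqrt
  u k (i - Pi.single 0 (k * k + k : ℕ))

theorem blockConf_single_add (u : ℕ → Conf (d + 1)) {k : ℕ} {i : Fin (d + 1) → ℤ}
    (hi : ∀ t, (i t).natAbs ≤ k) : blockConf u (Pi.single 0 (k * k + k : ℕ) + i) = u k i := by
  have hi0 := hi 0
  have h : (((k * k + k : ℕ) : ℤ) + i 0).toNat = k * k + (k + i 0).toNat := by omega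
  simp only [blockConf, Pi.add_apply, Pi.single_eq_same, h,
    Nat.sqrt_add_eq k (by omega : (k + i 0).toNat ≤ k + k), add_sub_cancel_left]

theorem exists_forall_eqOn_zeta_translate :
    ∃ z : Conf (d + 1), ∀ (R : ℕ) (x : Conf (d + 1)),
      ∃ j, EqOn (zeta (Conf.translate j z)) (zeta x) (idxBall R) := by
  obtain ⟨u, hu⟩ := exists_seq_eqOn_zeta
  refine ⟨blockConf u, fun R x => ?_⟩
  obtain ⟨k, hRk, hk⟩ := hu R x
  refine ⟨(Pi.single 0 (k * k + k : ℕ), 0), fun s hs => ?_⟩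
  have hs1 := (idxNorm_le_iff.1 hs).1
  rw [zeta_translate, ← hk hs]
  simp only [zeta, Prod.fst_add, Prod.snd_add, zero_add,
    blockConf_single_add u fun t => (hs1 t).trans hRk]

end UniversalConfiguration

namespace SandAutomaton

variable {d : ℕ} (S : SandAutomaton d) {x y : Conf d} {i : Fin d → ℤ}

theorem global_apply_of_eq_ofInt {m : ℤ} (h : x i = ofInt m) :
    S.global x i = ofInt (m + S.f (saRange S.r x i)) := by
  simp [global, h]

theorem global_apply_bot (h : x i = ⊥) : S.global x i = ⊥ := by
  simp [global, h]

theorem global_apply_top (h : x i = ⊤) : S.global x i = ⊤ := by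
  simp [global, h]

theorem ofInt_le_global_of_le {k : ℤ} (h : ofInt (k + S.r) ≤ x i) :
    ofInt k ≤ S.global x i := by
  rcases eq_bot_or_eq_top_or_eq_ofInt (x i) with hx | hx | ⟨m, hx⟩
  · simp [hx] at h
  · simp [S.global_apply_top hx]
  · have := S.f_mem (saRange S.r x i)
    rw [hx, ofInt_le_ofInt] at h
    rw [S.global_apply_of_eq_ofInt hx, ofInt_le_ofInt]
    omega

theorem ofInt_le_of_ofInt_le_global {k : ℤ} (h : ofInt k ≤ S.global x i) :
    ofInt (k - S.r) ≤ x i := by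
  rcases eq_bot_or_eq_top_or_eq_ofInt (x i) with hx | hx | ⟨m, hx⟩
  · simp [S.global_apply_bot hx] at h
  · simp [hx]
  · have := S.f_mem (saRange S.r x i)
    rw [S.global_apply_of_eq_ofInt hx, ofInt_le_ofInt] at h
    rw [hx, ofInt_le_ofInt]
    omega

theorem commute_global_translate (j : (Fin d → ℤ) × ℤ) :
    Function.Commute S.global (Conf.translate j) := by
  intro x
  funext i
  rcases eq_bot_or_eq_top_or_eq_ofInt (x (i + j.1)) with hx | hx | ⟨m, hx⟩
  · rw [S.global_apply_bot (by simp [Conf.translate, hx])]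
    simp [Conf.translate, S.global_apply_bot hx]
  · rw [S.global_apply_top (by simp [Conf.translate, hx])]
    simp [Conf.translate, S.global_apply_top hx]
  · have hrange : saRange S.r (Conf.translate j x) i = saRange S.r x (i + j.1) :=
      funext fun t => by
        simp only [saRange, Conf.translate, hx, addInt_ofInt, toInt_ofInt, beta_add_addInt,
          add_right_comm]
    rw [S.global_apply_of_eq_ofInt (m := m + -j.2) (by simp [Conf.translate, hx]), hrange]
    simp only [Conf.translate, S.global_apply_of_eq_ofInt hx, addInt_ofInt, add_right_comm]

/- Since `|f| ≤ r`, the bit at height `k` of `F x` is forced unless `x i = m` lies within `r`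
of `k`; then `y i = m` as well, and the two ranges agree because `β_r^m` reads only the
heights `m - r, …, m + r + 1` of the neighbours. -/
theorem zeta_global_eq {j : (Fin d → ℤ) × ℤ}
    (h : ∀ s ∈ idxBall (2 * S.r + 1), zeta x (j + s) = zeta y (j + s)) :
    zeta (S.global x) j = zeta (S.global y) j := by
  obtain ⟨i, k⟩ := j
  have hbit : ∀ t : Fin d → ℤ, (∀ u, (t u).natAbs ≤ S.r) →
      ∀ q, (q - k).natAbs ≤ 2 * S.r + 1 → (ofInt q ≤ x (i + t) ↔ ofInt q ≤ y (i + t)) :=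
    fun t ht q hq => by
      have := h (t, q - k) (idxNorm_le_iff.2 ⟨fun u => (ht u).trans (by omega), hq⟩)
      rwa [Prod.mk_add_mk, add_sub_cancel, zeta_apply_eq_iff] at this
  have hcentre := hbit 0 (by simp)
  simp only [add_zero] at hcentre
  rw [zeta_apply_eq_iff]
  by_cases hhi : ofInt (k + S.r) ≤ x i
  · exact iff_of_true (S.ofInt_le_global_of_le hhi)
      (S.ofInt_le_global_of_le ((hcentre _ (by omega)).1 hhi))
  by_cases hlo : ofInt (k - S.r) ≤ x i
  swap
  · exact iff_of_false (mt S.ofInt_le_of_ofInt_le_global hlo)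
      (mt S.ofInt_le_of_ofInt_le_global ((hcentre _ (by omega)).not.1 hlo))
  obtain ⟨m, hx⟩ : ∃ m, x i = ofInt m := by
    rcases eq_bot_or_eq_top_or_eq_ofInt (x i) with hx | hx | hx
    · simp [hx] at hlo
    · simp [hx] at hhi
    · exact hx
  rw [hx, ofInt_le_ofInt] at hhi hlo
  have hy : y i = ofInt m := by
    rw [eq_ofInt_iff, ← hcentre m (by omega), ← hcentre (m + 1) (by omega), hx]
    simp
  have hrange : saRange S.r x i = saRange S.r y i := funext fun t => by
    simp only [saRange, hx, hy, toInt_ofInt]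
    exact beta_congr fun q hq => hbit t.1 t.2.1 q (by omega)
  rw [S.global_apply_of_eq_ofInt hx, S.global_apply_of_eq_ofInt hy, hrange]

theorem eqOn_global {R : ℕ} (h : EqOn (zeta x) (zeta y) (idxBall (R + (2 * S.r + 1)))) :
    EqOn (zeta (S.global x)) (zeta (S.global y)) (idxBall R) := fun j hj =>
  S.zeta_global_eq fun s hs => h ((idxNorm_add_le j s).trans (add_le_add hj hs))

theorem eqOn_iterate_global {R : ℕ} (n : ℕ)
    (h : EqOn (zeta x) (zeta y) (idxBall (R + n * (2 * S.r + 1)))) :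
    EqOn (zeta (S.global^[n] x)) (zeta (S.global^[n] y)) (idxBall R) := by
  induction n generalizing x y with
  | zero => simpa using h
  | succ n ih =>
    rw [iterate_succ_apply, iterate_succ_apply]
    exact ih (S.eqOn_global (by rwa [add_assoc, ← add_one_mul]))

theorem eqOn_iterate_of_iterate_eq {n p : ℕ} (hp : 0 < p)
    (h : S.global^[n + p] = S.global^[n]) (k : ℕ) :
    ∃ K : ℕ, ∀ x y : Conf d, EqOn (zeta x) (zeta y) (idxBall K) →
      ∀ m : ℕ, EqOn (zeta (S.global^[m] x)) (zeta (S.global^[m] y)) (idxBall k) :=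
  ⟨k + (n + p) * (2 * S.r + 1), fun x y hxy m => by
    obtain ⟨m', hm', hm⟩ := exists_lt_iterate_eq hp h m
    rw [hm]
    exact S.eqOn_iterate_global m' (hxy.mono (idxBall_mono (by gcongr)))⟩

end SandAutomaton

theorem SandAutomaton.exists_iterate_eq_of_forall_exists_iterate_apply_eq {d : ℕ}
    (S : SandAutomaton (d + 1))
    (h : ∀ x : Conf (d + 1), ∃ n p : ℕ, 0 < p ∧ S.global^[n + p] x = S.global^[n] x) :
    ∃ n p : ℕ, 0 < p ∧ S.global^[n + p] = S.global^[n] := by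
  obtain ⟨z, hz⟩ := exists_forall_eqOn_zeta_translate
  obtain ⟨n, p, hp, hzp⟩ := h z
  have hcomm m j := (S.commute_global_translate j).iterate_left m
  refine ⟨n, p, hp, eq_of_forall_zeta_zero_eq (hcomm _) (hcomm _) fun x => ?_⟩
  obtain ⟨j, hj⟩ := hz ((n + p) * (2 * S.r + 1)) x
  have hiter : ∀ m ≤ n + p,
      zeta (S.global^[m] x) 0 = zeta (Conf.translate j (S.global^[m] z)) 0 := fun m hm => by
    rw [← (hcomm m j).eq z]
    refine (S.eqOn_iterate_global (R := 0) m (hj.mono (idxBall_mono ?_)) (zero_mem_idxBall 0)).symm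
    rw [zero_add]
    gcongr
  rw [hiter _ le_rfl, hiter n (by omega), hzp]

/-- For the global rule `F` of a sand automaton, the following
are equivalent: (1) `F` is equicontinuous; (2) `F` is ultimately periodic;
(3) every configuration is ultimately periodic for `F`. -/
theorem sa_equicontinuous_iff_ultimately_periodic (d : ℕ) (hd : 1 ≤ d)
    (S : SandAutomaton d) (F : Conf d → Conf d) (hF : F = S.global) :
    ((∀ ε : ℝ, 0 < ε → ∃ δ : ℝ, 0 < δ ∧ ∀ x y : Conf d, saDist x y < δ →
        ∀ n : ℕ, saDist (F^[n] x) (F^[n] y) < ε) ↔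
      (∃ (n p : ℕ), 0 < p ∧ F^[n + p] = F^[n])) ∧
    ((∃ (n p : ℕ), 0 < p ∧ F^[n + p] = F^[n]) ↔
      (∀ x : Conf d, ∃ (n p : ℕ), 0 < p ∧ F^[n + p] x = F^[n] x)) := by
  subst hF
  obtain ⟨d, rfl⟩ : ∃ d', d = d' + 1 := ⟨d - 1, by omega⟩
  rw [equicontinuous_iff_eqOn]
  refine ⟨⟨fun h => ?_, fun ⟨n, p, hp, h⟩ => S.eqOn_iterate_of_iterate_eq hp h⟩,
    fun ⟨n, p, hp, h⟩ x => ⟨n, p, hp, congrFun h x⟩,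
    S.exists_iterate_eq_of_forall_exists_iterate_apply_eq⟩
  obtain ⟨K, hK⟩ := h 0
  exact exists_iterate_eq_of_eqOn S.commute_global_translate
    fun x y hxy n => hK x y hxy n (zero_mem_idxBall 0)
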